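/- Let P = {p_k : k ≥ 1} be a probability distribution on a countable alphabet. Then P belongs to Domain 1 (i.e., limsup_{n→∞} t_n = c_P for some finite constant c_P > 0) if and only if (1) the effective cardinality K = #{k : p_k > 0} is infinite, and (2) there exists a constant u_P > 0 such that t_n ≤ u_P for all n. -/

import Mathlib

/-!
If the support of `p` is finite, every summand of `t_n` is `n q (1 - q)^n` with `0 < q ≤ 1`,
which tends to `0`, so `limsup t_n = 0`. If the support is infinite, there are arbitrarily small
`q = p_k > 0`; for `n = ⌈1/q⌉` the single summand `n q (1 - q)^n` is at least `e^{-4}`, so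
`limsup t_n ≥ e^{-4}`. Together with an upper bound `u` this pins `limsup t_n` to a real number
in `[e^{-4}, u]`; conversely a finite `limsup` bounds the sequence.
-/

open Filter Topology

/-- The tail index `t_n = n * ∑_k p_k (1 - p_k)^n`. -/
noncomputable def tailIndex (p : ℕ → ℝ) (n : ℕ) : ℝ :=
  (n : ℝ) * ∑' k, p k * (1 - p k) ^ n

section EReal

variable {f : ℕ → ℝ}

lemma exists_pos_upper_bound_of_limsup_coe_ne_top
    (h : limsup (fun n => (f n : EReal)) atTop ≠ ⊤) :
    ∃ u : ℝ, 0 < u ∧ ∀ n, f n ≤ u := by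
  obtain ⟨r, hr, -⟩ := EReal.lt_iff_exists_real_btwn.1 (lt_top_iff_ne_top.2 h)
  have hbdd : BddAbove (Set.range f) :=
    IsBoundedUnder.bddAbove_range
      ⟨r, (eventually_lt_of_limsup_lt hr).mono fun n hn => (EReal.coe_lt_coe_iff.1 hn).le⟩
  obtain ⟨u, hu⟩ := hbdd
  exact ⟨max u 1, by positivity, fun n => (hu ⟨n, rfl⟩).trans (le_max_left u 1)⟩

lemma exists_limsup_coe_eq_of_le_of_frequently_le {a u : ℝ} (hu : ∀ n, f n ≤ u)
    (ha : ∃ᶠ n in atTop, a ≤ f n) :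
    ∃ c : ℝ, a ≤ c ∧ limsup (fun n => (f n : EReal)) atTop = c := by
  set L := limsup (fun n => (f n : EReal)) atTop
  have hLu : L ≤ u := limsup_le_of_le isCobounded_le_of_bot
    (Eventually.of_forall fun n => EReal.coe_le_coe_iff.2 (hu n))
  have haL : (a : EReal) ≤ L :=
    le_limsup_of_frequently_le' (ha.mono fun n hn => by exact_mod_cast hn)
  have hL : (L.toReal : EReal) = L :=
    EReal.coe_toReal (ne_top_of_le_ne_top (EReal.coe_ne_top u) hLu)
      (ne_bot_of_le_ne_bot (EReal.coe_ne_bot a) haL)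
  exact ⟨L.toReal, by rw [← EReal.coe_le_coe_iff, hL]; exact haL, hL.symm⟩

end EReal

lemma Real.exp_neg_two_mul_le_one_sub {q : ℝ} (hq0 : 0 ≤ q) (hq : q ≤ 1 / 2) :
    Real.exp (-(2 * q)) ≤ 1 - q := by
  have h : Real.exp (-(2 * q)) ≤ (1 + 2 * q)⁻¹ := by
    rw [Real.exp_neg]
    exact inv_anti₀ (by positivity) (by linarith [Real.add_one_le_exp (2 * q)])
  refine h.trans ?_
  rw [inv_le_iff_one_le_mul₀ (by positivity)]
  nlinarith

lemma exp_neg_four_le_ceil_inv_mul {q : ℝ} (hq : q ∈ Set.Ioo 0 (1 / 2)) :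
    Real.exp (-4) ≤ ⌈q⁻¹⌉₊ * (q * (1 - q) ^ ⌈q⁻¹⌉₊) := by
  obtain ⟨hq0, hq⟩ := hq
  set n := ⌈q⁻¹⌉₊
  have hnq_ge : 1 ≤ n * q := by
    rw [← inv_mul_cancel₀ hq0.ne']
    exact mul_le_mul_of_nonneg_right (Nat.le_ceil _) hq0.le
  have hnq_le : n * q ≤ 2 := by
    have := mul_lt_mul_of_pos_right (Nat.ceil_lt_add_one (inv_nonneg.2 hq0.le)) hq0
    rw [add_mul, inv_mul_cancel₀ hq0.ne'] at this
    linarith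
  calc Real.exp (-4) ≤ Real.exp (-(2 * q)) ^ n := by
        rw [← Real.exp_nat_mul, Real.exp_le_exp]
        linarith
    _ ≤ (1 - q) ^ n := by
        gcongr
        exact Real.exp_neg_two_mul_le_one_sub hq0.le hq.le
    _ ≤ n * q * (1 - q) ^ n := le_mul_of_one_le_left (pow_nonneg (by linarith) n) hnq_ge
    _ = n * (q * (1 - q) ^ n) := mul_assoc _ _ _

lemma tendsto_nat_mul_mul_one_sub_pow {q : ℝ} (hq0 : 0 ≤ q) (hq1 : q ≤ 1) :
    Tendsto (fun n : ℕ => n * (q * (1 - q) ^ n)) atTop (𝓝 0) := by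
  rcases hq0.eq_or_lt with rfl | hq0
  · simp
  have h :=
    (tendsto_self_mul_const_pow_of_lt_one (by linarith) (by linarith : 1 - q < 1)).mul_const q
  rw [zero_mul] at h
  exact h.congr fun n => by ring

section TailIndex

variable {p : ℕ → ℝ}

lemma summable_mul_one_sub_pow (hp : ∀ k, 0 ≤ p k) (hle : ∀ k, p k ≤ 1) (hs : Summable p)
    (n : ℕ) : Summable fun k => p k * (1 - p k) ^ n :=
  hs.of_nonneg_of_le (fun k => mul_nonneg (hp k) (pow_nonneg (by linarith [hle k]) n))
    fun k => mul_le_of_le_one_right (hp k)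
      (pow_le_one₀ (by linarith [hle k]) (by linarith [hp k]))

lemma nat_mul_mul_one_sub_pow_le_tailIndex (hp : ∀ k, 0 ≤ p k) (hle : ∀ k, p k ≤ 1)
    (hs : Summable p) (n k : ℕ) : n * (p k * (1 - p k) ^ n) ≤ tailIndex p n :=
  mul_le_mul_of_nonneg_left ((summable_mul_one_sub_pow hp hle hs n).le_tsum k
    fun j _ => mul_nonneg (hp j) (pow_nonneg (by linarith [hle j]) n)) n.cast_nonneg

lemma tendsto_tailIndex_zero_of_finite (hp : ∀ k, 0 ≤ p k) (hle : ∀ k, p k ≤ 1)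
    (hfin : {k | 0 < p k}.Finite) : Tendsto (tailIndex p) atTop (𝓝 0) := by
  have htail : ∀ n, tailIndex p n = ∑ k ∈ hfin.toFinset, n * (p k * (1 - p k) ^ n) := by
    intro n
    rw [tailIndex, ← Finset.mul_sum, tsum_eq_sum fun k hk => ?_]
    have : p k = 0 := le_antisymm (by simpa using hk) (hp k)
    simp [this]
  rw [funext htail]
  simpa using tendsto_finsetSum _ fun k _ => tendsto_nat_mul_mul_one_sub_pow (hp k) (hle k)

lemma frequently_exp_neg_four_le_tailIndex (hp : ∀ k, 0 ≤ p k) (hle : ∀ k, p k ≤ 1)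
    (hs : Summable p) (hinf : {k | 0 < p k}.Infinite) :
    ∃ᶠ n in atTop, Real.exp (-4) ≤ tailIndex p n := by
  set F := atTop ⊓ 𝓟 {k | 0 < p k}
  have : F.NeBot := frequently_iff_neBot.1 (Nat.frequently_atTop_iff_infinite.2 hinf)
  have hp0 : Tendsto p F (𝓝[>] 0) :=
    tendsto_nhdsWithin_iff.2 ⟨hs.tendsto_atTop_zero.mono_left inf_le_left,
      mem_inf_of_right (mem_principal_self _)⟩
  have hsmall : ∀ᶠ k in F, p k ∈ Set.Ioo 0 (1 / 2) :=
    hp0.eventually (Ioo_mem_nhdsGT (by norm_num))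
  have hceil : Tendsto (fun k => ⌈(p k)⁻¹⌉₊) F atTop :=
    tendsto_nat_ceil_atTop.comp (tendsto_inv_nhdsGT_zero.comp hp0)
  refine hceil.frequently (hsmall.mono fun k hk => ?_).frequently
  exact (exp_neg_four_le_ceil_inv_mul hk).trans (nat_mul_mul_one_sub_pow_le_tailIndex hp hle hs _ k)

end TailIndex

/-- `P` belongs to Domain 1 (`limsup t_n` is a finite positive constant) if and only if
(1) the effective cardinality is infinite, and (2) `t_n` is bounded above by some
constant `u_P > 0`. -/
theorem stmt8 (p : ℕ → ℝ) (hp : ∀ k, 0 ≤ p k) (hsum : ∑' k, p k = 1) :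
    (∃ c : ℝ, 0 < c ∧
        Filter.limsup (fun n : ℕ => ((tailIndex p n : ℝ) : EReal)) atTop = (c : EReal)) ↔
      ({k | 0 < p k}.Infinite ∧ ∃ u : ℝ, 0 < u ∧ ∀ n : ℕ, tailIndex p n ≤ u) := by
  have hs : Summable p := by
    by_contra h
    simp [tsum_eq_zero_of_not_summable h] at hsum
  have hle : ∀ k, p k ≤ 1 := fun k => hsum ▸ hs.le_tsum k fun j _ => hp j
  constructor
  · rintro ⟨c, hc, hlim⟩
    refine ⟨fun hfin => hc.ne' ?_,
      exists_pos_upper_bound_of_limsup_coe_ne_top (hlim ▸ EReal.coe_ne_top c)⟩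
    have h0 := (EReal.tendsto_coe.2
      (tendsto_tailIndex_zero_of_finite hp hle hfin)).limsup_eq
    rw [hlim] at h0
    exact_mod_cast h0
  · rintro ⟨hinf, u, -, hu⟩
    obtain ⟨c, hc, hlim⟩ := exists_limsup_coe_eq_of_le_of_frequently_le hu
      (frequently_exp_neg_four_le_tailIndex hp hle hs hinf)
    exact ⟨c, (Real.exp_pos _).trans_le hc, hlim⟩
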